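/- arXiv:2203.00309 — 2 statements merged into one kernel-verified Lean document; each statement's English description precedes it below -/
import Mathlib

section
/- Let φ₀ be a Schwartz function on ℝ², N a large positive integer, and for integers j with -N ≤ j ≤ 0 set Φ_{j,N}(x) = φ₀(2^j(x - 2^{|j|+2N}e₁)). If j₁, j₂, j₃, j₄ ∈ [-N, 0] ∩ ℤ with j₁ ≠ j₂, then there exists a constant C independent of N and of the indices such that ∫_{ℝ²} |Φ_{j₁,N}(x) Φ_{j₂,N}(x) Φ_{j₃,N}(x) Φ_{j₄,N}(x)| dx ≤ C. -/
open MeasureTheory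
noncomputable section

abbrev R2 := EuclideanSpace ℝ (Fin 2)

def e1 : R2 := EuclideanSpace.single 0 1

/-- The bump `Φ_{j,N}(x) = φ₀(2^j (x - 2^{|j|+2N} e₁))`. -/
def Phi (φ₀ : SchwartzMap R2 ℝ) (N : ℕ) (j : ℤ) (x : R2) : ℝ :=
  φ₀ ((2:ℝ) ^ j • (x - (2:ℝ) ^ (|j| + 2 * (N:ℤ)) • e1))

lemma e1_norm : ‖e1‖ = 1 := by
  rw [e1, EuclideanSpace.norm_single, norm_one]

/-- Separation of powers of two. -/
lemma centers_sep (N : ℕ) (a b : ℤ) (hab : a ≠ b) (ha : 2*(N:ℤ) ≤ a) (hb : 2*(N:ℤ) ≤ b) :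
    (2:ℝ)^(2*(N:ℤ)) ≤ |(2:ℝ)^a - (2:ℝ)^b| := by
  wlog h : a < b generalizing a b
  · rw [abs_sub_comm]; exact this b a hab.symm hb ha (by omega)
  have h2 : (2:ℝ)^a ≤ 2^(b-1) := zpow_le_zpow_right₀ one_le_two (by omega)
  have h3 : (2:ℝ)^b = 2^(b-1) * 2 := by
    rw [← zpow_add_one₀ (by norm_num : (2:ℝ) ≠ 0)]; ring_nf
  have h4 : (2:ℝ)^(2*(N:ℤ)) ≤ 2^(b-1) := zpow_le_zpow_right₀ one_le_two (by omega)
  have hpos : (0:ℝ) < 2^(b-1) := by positivity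
  rw [abs_sub_comm, abs_of_nonneg (by linarith)]
  linarith

/-- Integral bound for a single bump. -/
lemma bump_int_le (φ₀ : SchwartzMap R2 ℝ) (N : ℕ) (j : ℤ) (hj : -(N:ℤ) ≤ j) :
    ∫ x : R2, |Phi φ₀ N j x| ≤ (2:ℝ)^(2*(N:ℤ)) * ∫ x : R2, ‖φ₀ x‖ := by
  simp only [Phi, ← Real.norm_eq_abs]
  set v : R2 := (2:ℝ) ^ (|j| + 2 * (N:ℤ)) • e1
  have h1 : ∫ x : R2, ‖φ₀ ((2:ℝ)^j • (x - v))‖ = ∫ x : R2, ‖φ₀ ((2:ℝ)^j • x)‖ :=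
    integral_sub_right_eq_self (fun y => ‖φ₀ ((2:ℝ)^j • y)‖) v
  have h2 : ∫ x : R2, ‖φ₀ ((2:ℝ)^j • x)‖
      = |(((2:ℝ)^j) ^ Module.finrank ℝ R2)⁻¹| • ∫ x : R2, ‖φ₀ x‖ :=
    Measure.integral_comp_smul volume (fun y => ‖φ₀ y‖) ((2:ℝ)^j)
  rw [h1, h2]
  have hfr : Module.finrank ℝ R2 = 2 := finrank_euclideanSpace_fin
  rw [hfr, smul_eq_mul]
  have hint : (0:ℝ) ≤ ∫ x : R2, ‖φ₀ x‖ := integral_nonneg fun x => norm_nonneg (φ₀ x)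
  have habs : |(((2:ℝ)^j) ^ (2:ℕ))⁻¹| ≤ (2:ℝ)^(2*(N:ℤ)) := by
    rw [abs_of_nonneg (by positivity), ← zpow_natCast ((2:ℝ)^j) 2, ← zpow_mul, ← zpow_neg]
    exact zpow_le_zpow_right₀ one_le_two (by omega)
  exact mul_le_mul_of_nonneg_right habs hint

lemma phi_abs_integrable (φ₀ : SchwartzMap R2 ℝ) (N : ℕ) (j : ℤ) :
    Integrable (fun x : R2 => |Phi φ₀ N j x|) := by
  simp only [Phi, ← Real.norm_eq_abs]
  exact ((φ₀.integrable.comp_smul (zpow_ne_zero j (two_ne_zero))).comp_sub_right _).norm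

/-- If two of the four indices are distinct, the integral of the product of the four
bumps is bounded by a constant independent of `N` and of the indices. -/
theorem stmt1 (φ₀ : SchwartzMap R2 ℝ) :
    ∃ C : ℝ, ∀ (N : ℕ) (j₁ j₂ j₃ j₄ : ℤ), 0 < N →
      -(N:ℤ) ≤ j₁ → j₁ ≤ 0 → -(N:ℤ) ≤ j₂ → j₂ ≤ 0 →
      -(N:ℤ) ≤ j₃ → j₃ ≤ 0 → -(N:ℤ) ≤ j₄ → j₄ ≤ 0 → j₁ ≠ j₂ →
      ∫ x : R2, |Phi φ₀ N j₁ x * Phi φ₀ N j₂ x * Phi φ₀ N j₃ x * Phi φ₀ N j₄ x| ≤ C := by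
  obtain ⟨B, hB0, hB⟩ := φ₀.decay 0 0
  obtain ⟨D, hD0, hD⟩ := φ₀.decay 3 0
  simp only [norm_iteratedFDeriv_zero, pow_zero, one_mul] at hB hD
  refine ⟨16 * D * B^2 * (∫ x : R2, ‖φ₀ x‖), ?_⟩
  intro N j₁ j₂ j₃ j₄ hN h1l h1u h2l h2u _ _ _ _ hne
  set L : ℝ := ∫ x : R2, ‖φ₀ x‖ with hLdef
  have hL0 : 0 ≤ L := integral_nonneg fun x => norm_nonneg (φ₀ x)
  set ε : ℝ := D * (2:ℝ)^(3 - 3*(N:ℤ)) with hεdef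
  have hε0 : 0 ≤ ε := by positivity
  have hB' : ∀ y : R2, |φ₀ y| ≤ B := fun y => (Real.norm_eq_abs (φ₀ y)) ▸ hB y
  -- the smallness bound far away
  have small : ∀ (j : ℤ), -(N:ℤ) ≤ j → ∀ y : R2,
      (2:ℝ)^(2*(N:ℤ) - 1) ≤ ‖y‖ → |φ₀ ((2:ℝ)^j • y)| ≤ ε := by
    intro j hj y hy
    set z : R2 := (2:ℝ)^j • y with hzdef
    have hz : (2:ℝ)^((N:ℤ) - 1) ≤ ‖z‖ := by
      rw [hzdef, norm_smul, Real.norm_eq_abs, abs_of_nonneg (by positivity : (0:ℝ) ≤ (2:ℝ)^j)]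
      calc (2:ℝ)^((N:ℤ)-1) = 2^j * 2^(((N:ℤ)-1) - j) := by
            rw [← zpow_add₀ (by norm_num : (2:ℝ) ≠ 0)]
            congr 1
            ring
        _ ≤ 2^j * 2^(2*(N:ℤ)-1) :=
            mul_le_mul_of_nonneg_left (zpow_le_zpow_right₀ one_le_two (by omega))
              (by positivity)
        _ ≤ 2^j * ‖y‖ := mul_le_mul_of_nonneg_left hy (by positivity)
    have hzpos : (0:ℝ) < ‖z‖ := lt_of_lt_of_le (by positivity) hz
    have hle : |φ₀ z| ≤ D / ‖z‖^3 := by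
      rw [le_div_iff₀ (by positivity)]
      calc |φ₀ z| * ‖z‖^3 = ‖z‖^3 * ‖φ₀ z‖ := by
            rw [Real.norm_eq_abs]
            ring
        _ ≤ D := hD z
    have h2 : D / ‖z‖^3 ≤ D / ((2:ℝ)^((N:ℤ)-1))^3 := by gcongr
    have heq : D / ((2:ℝ)^((N:ℤ)-1))^(3:ℕ) = ε := by
      rw [hεdef, ← zpow_natCast ((2:ℝ)^((N:ℤ)-1)) 3, ← zpow_mul, div_eq_mul_inv, ← zpow_neg]
      congr 1
      ring
    calc |φ₀ z| ≤ D / ‖z‖^3 := hle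
      _ ≤ D / ((2:ℝ)^((N:ℤ)-1))^3 := h2
      _ = ε := heq
  -- dichotomy: one of the first two bumps is small
  have key2 : ∀ x : R2, |Phi φ₀ N j₁ x| ≤ ε ∨ |Phi φ₀ N j₂ x| ≤ ε := by
    intro x
    simp only [Phi]
    set c₁ : ℝ := (2:ℝ)^(|j₁| + 2*(N:ℤ)) with hc1
    set c₂ : ℝ := (2:ℝ)^(|j₂| + 2*(N:ℤ)) with hc2
    have hsep : (2:ℝ)^(2*(N:ℤ)) ≤ |c₁ - c₂| := by
      apply centers_sep N _ _ _ (by linarith [abs_nonneg j₁]) (by linarith [abs_nonneg j₂])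
      rw [abs_of_nonpos h1u, abs_of_nonpos h2u]
      omega
    have htri : (2:ℝ)^(2*(N:ℤ)) ≤ ‖x - c₁ • e1‖ + ‖x - c₂ • e1‖ := by
      have heq : (x - c₂ • e1) - (x - c₁ • e1) = (c₁ - c₂) • e1 := by module
      calc (2:ℝ)^(2*(N:ℤ)) ≤ |c₁ - c₂| := hsep
        _ = ‖(x - c₂ • e1) - (x - c₁ • e1)‖ := by
            rw [heq, norm_smul, e1_norm, mul_one, Real.norm_eq_abs]
        _ ≤ ‖x - c₂ • e1‖ + ‖x - c₁ • e1‖ := norm_sub_le _ _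
        _ = ‖x - c₁ • e1‖ + ‖x - c₂ • e1‖ := add_comm _ _
    have h2N : (2:ℝ)^(2*(N:ℤ)) = 2^(2*(N:ℤ)-1) * 2 := by
      rw [← zpow_add_one₀ (by norm_num : (2:ℝ) ≠ 0)]; ring_nf
    rcases le_or_gt ((2:ℝ)^(2*(N:ℤ)-1)) ‖x - c₁ • e1‖ with h | h
    · exact Or.inl (small j₁ h1l _ h)
    · refine Or.inr (small j₂ h2l _ ?_)
      linarith
  -- pointwise bound on the product
  have hpt : ∀ x : R2, |Phi φ₀ N j₁ x * Phi φ₀ N j₂ x * Phi φ₀ N j₃ x * Phi φ₀ N j₄ x|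
      ≤ ε * B^2 * (|Phi φ₀ N j₁ x| + |Phi φ₀ N j₂ x|) := by
    intro x
    have b3 : |Phi φ₀ N j₃ x| ≤ B := by rw [Phi]; exact hB' _
    have b4 : |Phi φ₀ N j₄ x| ≤ B := by rw [Phi]; exact hB' _
    have a1 : (0:ℝ) ≤ |Phi φ₀ N j₁ x| := abs_nonneg _
    have a2 : (0:ℝ) ≤ |Phi φ₀ N j₂ x| := abs_nonneg _
    have a3 : (0:ℝ) ≤ |Phi φ₀ N j₃ x| := abs_nonneg _
    have a4 : (0:ℝ) ≤ |Phi φ₀ N j₄ x| := abs_nonneg _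
    have hεB : (0:ℝ) ≤ ε * B^2 := by positivity
    rw [abs_mul, abs_mul, abs_mul]
    rcases key2 x with h | h
    · calc |Phi φ₀ N j₁ x| * |Phi φ₀ N j₂ x| * |Phi φ₀ N j₃ x| * |Phi φ₀ N j₄ x|
          ≤ ε * |Phi φ₀ N j₂ x| * B * B := by gcongr
        _ = ε * B^2 * |Phi φ₀ N j₂ x| := by ring
        _ ≤ ε * B^2 * (|Phi φ₀ N j₁ x| + |Phi φ₀ N j₂ x|) := by
            apply mul_le_mul_of_nonneg_left _ hεB
            linarith
    · calc |Phi φ₀ N j₁ x| * |Phi φ₀ N j₂ x| * |Phi φ₀ N j₃ x| * |Phi φ₀ N j₄ x|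
          ≤ |Phi φ₀ N j₁ x| * ε * B * B := by gcongr
        _ = ε * B^2 * |Phi φ₀ N j₁ x| := by ring
        _ ≤ ε * B^2 * (|Phi φ₀ N j₁ x| + |Phi φ₀ N j₂ x|) := by
            apply mul_le_mul_of_nonneg_left _ hεB
            linarith
  -- integrability of the majorant
  have i1 : Integrable (fun x : R2 => |Phi φ₀ N j₁ x|) := phi_abs_integrable φ₀ N j₁
  have i2 : Integrable (fun x : R2 => |Phi φ₀ N j₂ x|) := phi_abs_integrable φ₀ N j₂
  have irhs : Integrable (fun x : R2 =>
      ε * B^2 * (|Phi φ₀ N j₁ x| + |Phi φ₀ N j₂ x|)) := (i1.add i2).const_mul _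
  -- conclude
  calc ∫ x : R2, |Phi φ₀ N j₁ x * Phi φ₀ N j₂ x * Phi φ₀ N j₃ x * Phi φ₀ N j₄ x|
      ≤ ∫ x : R2, ε * B^2 * (|Phi φ₀ N j₁ x| + |Phi φ₀ N j₂ x|) :=
        integral_mono_of_nonneg (Filter.Eventually.of_forall fun x => abs_nonneg _) irhs
          (Filter.Eventually.of_forall hpt)
    _ = ε * B^2 * ((∫ x : R2, |Phi φ₀ N j₁ x|) + ∫ x : R2, |Phi φ₀ N j₂ x|) := by
        rw [integral_const_mul, integral_add i1 i2]
    _ ≤ ε * B^2 * ((2:ℝ)^(2*(N:ℤ)) * L + (2:ℝ)^(2*(N:ℤ)) * L) := by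
        have hεB : (0:ℝ) ≤ ε * B^2 := by positivity
        apply mul_le_mul_of_nonneg_left _ hεB
        exact add_le_add (bump_int_le φ₀ N j₁ h1l) (bump_int_le φ₀ N j₂ h2l)
    _ = (2:ℝ)^(3 - 3*(N:ℤ)) * (2:ℝ)^(2*(N:ℤ)) * (2 * D * B^2 * L) := by
        rw [hεdef]; ring
    _ = (2:ℝ)^(3 - (N:ℤ)) * (2 * D * B^2 * L) := by
        rw [← zpow_add₀ (by norm_num : (2:ℝ) ≠ 0)]
        congr 2
        ring
    _ ≤ 8 * (2 * D * B^2 * L) := by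
        apply mul_le_mul_of_nonneg_right _ (by positivity)
        have := zpow_le_zpow_right₀ (one_le_two : (1:ℝ) ≤ 2) (show 3 - (N:ℤ) ≤ 3 by omega)
        norm_num at this
        linarith
    _ = 16 * D * B^2 * L := by ring
end
end

section
/- Let t₀ > 0 and ξ, η ∈ ℝ^d. Define G(ξ-η, η) = (e^{-t₀|ξ|²} - e^{-t₀(|ξ-η|²+|η|²)})/(|ξ-η|²+|η|²-|ξ|²) - t₀ e^{-t₀|ξ|²}. Then G(ξ-η, η) = t₀ e^{-t₀|ξ|²} ∑_{k=1}^∞ (-1)^k t₀^k/(k+1)! · ∑_{ℓ=0}^{k} ∑_{m=0}^{k-ℓ} C(k,ℓ) C(k-ℓ,m) |ξ-η|^{2ℓ} |η|^{2m} (-|ξ|²)^{k-ℓ-m}, and if |ξ| ≤ 2 and 2^{N-1} ≤ |ξ-η|, |η| ≤ 2^{N+1} with t₀ = (ln N)^{-1} 2^{-2N}, then |G(ξ-η,η)| ≤ C (ln N)^{-2} 2^{-2N}. -/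
open MeasureTheory
noncomputable section

lemma myExpTsum (x : ℝ) : Real.exp x = ∑' n : ℕ, x ^ n / n.factorial := by
  rw [Real.exp_eq_exp_ℝ, NormedSpace.exp_eq_tsum_div]

lemma myTrinom (x y z : ℝ) (k : ℕ) :
    ∑ l ∈ Finset.range (k+1), ∑ m ∈ Finset.range (k+1-l),
      (Nat.choose k l : ℝ) * (Nat.choose (k-l) m : ℝ) * x ^ l * y ^ m * z ^ (k-l-m)
    = (x + y + z) ^ k := by
  rw [add_assoc, add_pow]
  refine Finset.sum_congr rfl fun l hl => ?_
  have hl' : l ≤ k := Nat.lt_succ_iff.mp (Finset.mem_range.mp hl)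
  rw [add_pow, Finset.mul_sum, Finset.sum_mul, show k + 1 - l = (k - l) + 1 from by omega]
  exact Finset.sum_congr rfl fun m hm => by ring

lemma mySeriesKey (u : ℝ) :
    u * ∑' n : ℕ, (-u) ^ (n+1) / ((n+2).factorial : ℝ) = 1 - Real.exp (-u) - u := by
  have hs : Summable (fun n : ℕ => (-u) ^ n / (n.factorial : ℝ)) :=
    Real.summable_pow_div_factorial _
  have h2 := Summable.sum_add_tsum_nat_add 2 hs
  rw [← myExpTsum (-u)] at h2
  have hkey : ∑' n : ℕ, (-u) ^ (n+2) / ((n+2).factorial : ℝ) = Real.exp (-u) - 1 + u := by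
    have : ∑ i ∈ Finset.range 2, (-u) ^ i / (i.factorial : ℝ) = 1 - u := by
      simp [Finset.sum_range_succ]; ring
    linarith [h2]
  calc u * ∑' n : ℕ, (-u) ^ (n+1) / ((n+2).factorial : ℝ)
      = ∑' n : ℕ, u * ((-u) ^ (n+1) / ((n+2).factorial : ℝ)) := (tsum_mul_left).symm
    _ = ∑' n : ℕ, -((-u) ^ (n+2) / ((n+2).factorial : ℝ)) := by
        refine tsum_congr fun n => ?_
        rw [pow_succ]
        ring
    _ = -(∑' n : ℕ, (-u) ^ (n+2) / ((n+2).factorial : ℝ)) := tsum_neg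
    _ = 1 - Real.exp (-u) - u := by rw [hkey]; ring

lemma myQuad {u : ℝ} (hu : 0 ≤ u) : Real.exp (-u) ≤ 1 - u + u^2/2 := by
  set f : ℝ → ℝ := fun x => 1 - x + x^2/2 - Real.exp (-x) with hf
  have hd : ∀ x : ℝ, HasDerivAt f (x - 1 + Real.exp (-x)) x := by
    intro x
    have h1 : HasDerivAt (fun x : ℝ => 1 - x + x^2/2) (x - 1) x := by
      have h := ((hasDerivAt_const x (1:ℝ)).sub (hasDerivAt_id x)).add
        ((hasDerivAt_pow 2 x).div_const 2)
      have : (0 : ℝ) - 1 + (2:ℕ) * x ^ (2-1) / 2 = x - 1 := by norm_num; ring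
      rw [this] at h
      exact h
    have h2 : HasDerivAt (fun x : ℝ => Real.exp (-x)) (-Real.exp (-x)) x := by
      have : HasDerivAt (fun x : ℝ => Real.exp (-x)) (Real.exp (-x) * -1) x :=
        (Real.hasDerivAt_exp (-x)).comp x (hasDerivAt_neg x)
      convert this using 1
      ring
    have : HasDerivAt f ((x - 1) - -Real.exp (-x)) x := h1.sub h2
    convert this using 1
    ring
  have hmono : Monotone f := by
    refine monotone_of_deriv_nonneg (fun x => (hd x).differentiableAt) ?_
    intro x
    rw [(hd x).deriv]
    have := Real.add_one_le_exp (-x)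
    linarith
  have h0 : f 0 = 0 := by simp [hf]
  have := hmono hu
  rw [h0] at this
  simp only [hf] at this
  linarith

lemma myMain1 (t D : ℝ) (ht : t ≠ 0) (hD : D ≠ 0) :
    (1 - Real.exp (-(t*D)))/D - t
      = t * ∑' n : ℕ, (-(t*D))^(n+1) / ((n+2).factorial : ℝ) := by
  have hu : t*D ≠ 0 := mul_ne_zero ht hD
  have hS : (∑' n : ℕ, (-(t*D))^(n+1) / ((n+2).factorial : ℝ))
      = (1 - Real.exp (-(t*D)) - t*D)/(t*D) := by
    rw [eq_div_iff hu, mul_comm]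
    exact mySeriesKey (t*D)
  rw [hS]
  field_simp


lemma myBound (t A B a : ℝ) (ht : 0 < t) (hD4 : 4 ≤ A + B - a) (ha : 0 ≤ a) :
    |(Real.exp (-t * a) - Real.exp (-t * (A + B))) / (A + B - a) - t * Real.exp (-t * a)|
      ≤ t ^ 2 * (A + B - a) / 2 := by
  set D := A + B - a with hDdef
  have hDpos : 0 < D := by linarith
  have hexp : Real.exp (-t * (A + B)) = Real.exp (-t * a) * Real.exp (-(t * D)) := by
    rw [← Real.exp_add, hDdef]
    ring_nf
  have hGeq : (Real.exp (-t * a) - Real.exp (-t * (A + B))) / D - t * Real.exp (-t * a)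
      = -(Real.exp (-t * a) * ((Real.exp (-(t * D)) - 1 + t * D) / D)) := by
    rw [hexp]
    field_simp
    ring
  have hu : 0 ≤ t * D := mul_nonneg ht.le hDpos.le
  have hnum0 : 0 ≤ Real.exp (-(t * D)) - 1 + t * D := by
    have := Real.add_one_le_exp (-(t * D))
    linarith
  have hnum1 : Real.exp (-(t * D)) - 1 + t * D ≤ (t * D) ^ 2 / 2 := by
    have := myQuad hu
    linarith
  have hE1 : Real.exp (-t * a) ≤ 1 := by
    calc Real.exp (-t * a) ≤ Real.exp 0 := Real.exp_le_exp.mpr (by nlinarith)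
      _ = 1 := Real.exp_zero
  rw [hGeq, abs_neg,
    abs_of_nonneg (mul_nonneg (Real.exp_pos _).le (div_nonneg hnum0 hDpos.le))]
  calc Real.exp (-t * a) * ((Real.exp (-(t * D)) - 1 + t * D) / D)
      ≤ 1 * (((t * D) ^ 2 / 2) / D) := by
        apply mul_le_mul hE1 _ (div_nonneg hnum0 hDpos.le) zero_le_one
        gcongr
    _ = t ^ 2 * D / 2 := by
        rw [one_mul, div_div, show (t * D) ^ 2 = t ^ 2 * D * D by ring,
          mul_div_mul_right _ 2 hDpos.ne']

lemma myArith (L P Q D : ℝ) (hL : 0 < L) (hPQ : P * Q = 1) (hD : D ≤ 8 * Q) :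
    (L⁻¹ * P) ^ 2 * D / 2 ≤ 4 * L ^ (-(2:ℝ)) * P := by
  have hL2 : L ^ (-(2:ℝ)) = (L⁻¹) ^ 2 := by
    rw [Real.rpow_neg hL.le, Real.rpow_two, inv_pow]
  have h1 : (L⁻¹ * P) ^ 2 * D ≤ (L⁻¹ * P) ^ 2 * (8 * Q) :=
    mul_le_mul_of_nonneg_left hD (sq_nonneg _)
  have h2 : (L⁻¹ * P) ^ 2 * (8 * Q) / 2 = 4 * (L⁻¹) ^ 2 * P * (P * Q) := by ring
  rw [hL2]
  calc (L⁻¹ * P) ^ 2 * D / 2 ≤ (L⁻¹ * P) ^ 2 * (8 * Q) / 2 := by linarith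
    _ = 4 * (L⁻¹) ^ 2 * P * (P * Q) := h2
    _ = 4 * (L⁻¹) ^ 2 * P := by rw [hPQ, mul_one]

/-- `G(ξ-η, η)`: the divided difference of exponentials minus its leading Taylor term. -/
def Gfun (d : ℕ) (t₀ : ℝ) (ξ η : EuclideanSpace ℝ (Fin d)) : ℝ :=
  (Real.exp (-t₀ * ‖ξ‖ ^ 2) - Real.exp (-t₀ * (‖ξ - η‖ ^ 2 + ‖η‖ ^ 2))) /
      (‖ξ - η‖ ^ 2 + ‖η‖ ^ 2 - ‖ξ‖ ^ 2) -
    t₀ * Real.exp (-t₀ * ‖ξ‖ ^ 2)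

/-- The trinomial expansion of `G` (series over `k ≥ 1`, written with `k = n+1`), and the
size bound `|G| ≤ C (ln N)^{-2} 2^{-2N}` in the frequency-localized regime with
`t₀ = (ln N)^{-1} 2^{-2N}`. -/
theorem stmt9 (d : ℕ) :
    (∀ t₀ : ℝ, 0 < t₀ → ∀ ξ η : EuclideanSpace ℝ (Fin d),
      ‖ξ - η‖ ^ 2 + ‖η‖ ^ 2 - ‖ξ‖ ^ 2 ≠ 0 →
      Gfun d t₀ ξ η
        = t₀ * Real.exp (-t₀ * ‖ξ‖ ^ 2) *
          ∑' n : ℕ,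
            (-1:ℝ) ^ (n + 1) * t₀ ^ (n + 1) / (Nat.factorial (n + 2)) *
              ∑ l ∈ Finset.range (n + 2), ∑ m ∈ Finset.range (n + 2 - l),
                (Nat.choose (n + 1) l : ℝ) * (Nat.choose (n + 1 - l) m : ℝ) *
                  ‖ξ - η‖ ^ (2 * l) * ‖η‖ ^ (2 * m) * (-‖ξ‖ ^ 2) ^ (n + 1 - l - m)) ∧
    ∃ C : ℝ, ∀ (N : ℕ) (ξ η : EuclideanSpace ℝ (Fin d)), 2 ≤ N →
      ‖ξ‖ ≤ 2 →
      (2:ℝ) ^ ((N:ℝ) - 1) ≤ ‖ξ - η‖ → ‖ξ - η‖ ≤ (2:ℝ) ^ ((N:ℝ) + 1) →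
      (2:ℝ) ^ ((N:ℝ) - 1) ≤ ‖η‖ → ‖η‖ ≤ (2:ℝ) ^ ((N:ℝ) + 1) →
      |Gfun d ((Real.log N)⁻¹ * (2:ℝ) ^ (-(2 * (N:ℝ)))) ξ η|
        ≤ C * (Real.log N) ^ (-(2:ℝ)) * (2:ℝ) ^ (-(2 * (N:ℝ))) := by
  constructor
  · intro t₀ ht ξ η hD
    have htsum : (∑' n : ℕ,
          (-1:ℝ) ^ (n + 1) * t₀ ^ (n + 1) / (Nat.factorial (n + 2)) *
            ∑ l ∈ Finset.range (n + 2), ∑ m ∈ Finset.range (n + 2 - l),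
              (Nat.choose (n + 1) l : ℝ) * (Nat.choose (n + 1 - l) m : ℝ) *
                ‖ξ - η‖ ^ (2 * l) * ‖η‖ ^ (2 * m) * (-‖ξ‖ ^ 2) ^ (n + 1 - l - m))
        = ∑' n : ℕ,
            (-(t₀ * (‖ξ - η‖ ^ 2 + ‖η‖ ^ 2 - ‖ξ‖ ^ 2))) ^ (n+1) / ((n + 2).factorial : ℝ) := by
      refine tsum_congr fun n => ?_
      have h := myTrinom (‖ξ - η‖ ^ 2) (‖η‖ ^ 2) (-‖ξ‖ ^ 2) (n+1)
      rw [← sub_eq_add_neg] at h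
      simp_rw [pow_mul]
      rw [h, ← neg_one_mul (t₀ * (‖ξ - η‖ ^ 2 + ‖η‖ ^ 2 - ‖ξ‖ ^ 2)), mul_pow, mul_pow]
      ring
    rw [htsum]
    have hexp : Real.exp (-t₀ * (‖ξ - η‖ ^ 2 + ‖η‖ ^ 2))
        = Real.exp (-t₀ * ‖ξ‖ ^ 2) *
            Real.exp (-(t₀ * (‖ξ - η‖ ^ 2 + ‖η‖ ^ 2 - ‖ξ‖ ^ 2))) := by
      rw [← Real.exp_add]
      ring_nf
    have hmain := myMain1 t₀ (‖ξ - η‖ ^ 2 + ‖η‖ ^ 2 - ‖ξ‖ ^ 2) ht.ne' hD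
    unfold Gfun
    rw [hexp, mul_comm t₀ (Real.exp (-t₀ * ‖ξ‖ ^ 2)), mul_assoc, ← hmain]
    have hE : Real.exp (-t₀ * ‖ξ‖ ^ 2) ≠ 0 := (Real.exp_pos _).ne'
    field_simp
  · refine ⟨4, fun N ξ η hN hξ h1 h2 h3 h4 => ?_⟩
    have hNr : (2:ℝ) ≤ (N:ℝ) := by exact_mod_cast hN
    have hL : 0 < Real.log N := Real.log_pos (by linarith)
    set L := Real.log N with hLdef
    set P := (2:ℝ) ^ (-(2 * (N:ℝ))) with hPdef
    set Q := (2:ℝ) ^ (2 * (N:ℝ)) with hQdef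
    have hP : 0 < P := Real.rpow_pos_of_pos two_pos _
    have hQ : 0 < Q := Real.rpow_pos_of_pos two_pos _
    have hPQ : P * Q = 1 := by
      rw [hPdef, hQdef, ← Real.rpow_add two_pos]
      norm_num
    set t₀ := L⁻¹ * P with ht₀def
    have ht : 0 < t₀ := mul_pos (inv_pos.mpr hL) hP
    have hsq : ∀ y : ℝ, ((2:ℝ) ^ y) ^ 2 = (2:ℝ) ^ (2 * y) := by
      intro y
      rw [← Real.rpow_two, ← Real.rpow_mul (by norm_num : (0:ℝ) ≤ 2), mul_comm]
    -- lower bounds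
    have hlow : (2:ℝ) ≤ (2:ℝ) ^ ((N:ℝ) - 1) := by
      calc (2:ℝ) = (2:ℝ) ^ (1:ℝ) := (Real.rpow_one 2).symm
        _ ≤ (2:ℝ) ^ ((N:ℝ) - 1) :=
          Real.rpow_le_rpow_of_exponent_le one_le_two (by linarith)
    have hA1 : (4:ℝ) ≤ ‖ξ - η‖ ^ 2 := by nlinarith [hlow.trans h1]
    have hB1 : (4:ℝ) ≤ ‖η‖ ^ 2 := by nlinarith [hlow.trans h3]
    have ha4 : ‖ξ‖ ^ 2 ≤ 4 := by nlinarith [norm_nonneg ξ]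
    have hupsq : ((2:ℝ) ^ ((N:ℝ) + 1)) ^ 2 = 4 * Q := by
      rw [hsq, show 2 * ((N:ℝ) + 1) = 2 * (N:ℝ) + 2 by ring, Real.rpow_add two_pos,
        Real.rpow_two, hQdef]
      ring
    have hA2 : ‖ξ - η‖ ^ 2 ≤ 4 * Q := by
      rw [← hupsq]
      have h0 : (0:ℝ) ≤ ‖ξ - η‖ := norm_nonneg _
      nlinarith
    have hB2 : ‖η‖ ^ 2 ≤ 4 * Q := by
      rw [← hupsq]
      have h0 : (0:ℝ) ≤ ‖η‖ := norm_nonneg _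
      nlinarith
    have hD4 : (4:ℝ) ≤ ‖ξ - η‖ ^ 2 + ‖η‖ ^ 2 - ‖ξ‖ ^ 2 := by linarith
    have hb := myBound t₀ (‖ξ - η‖ ^ 2) (‖η‖ ^ 2) (‖ξ‖ ^ 2) ht hD4 (sq_nonneg _)
    have hDub : ‖ξ - η‖ ^ 2 + ‖η‖ ^ 2 - ‖ξ‖ ^ 2 ≤ 8 * Q := by nlinarith [sq_nonneg ‖ξ‖]
    have ha := myArith L P Q (‖ξ - η‖ ^ 2 + ‖η‖ ^ 2 - ‖ξ‖ ^ 2) hL hPQ hDub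
    rw [ht₀def] at hb
    calc |Gfun d (L⁻¹ * P) ξ η| ≤ (L⁻¹ * P) ^ 2 * (‖ξ - η‖ ^ 2 + ‖η‖ ^ 2 - ‖ξ‖ ^ 2) / 2 := hb
      _ ≤ 4 * L ^ (-(2:ℝ)) * P := ha
end
end
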